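/- arXiv:2502.14414 — 2 statements merged into one kernel-verified Lean document; each statement's English description precedes it below -/
import Mathlib

section
/- Let q > 2 be an odd prime power. The reduced Datta-Johnsen code for m = 2, obtained by evaluating the linear combinations a y_1 + b y_2 + c of the elementary symmetric polynomials y_1 = x_1+x_2, y_2 = x_1x_2 on a set of representatives of the q(q-1)/2 unordered pairs of distinct elements of F_q, is a linear code of length q(q-1)/2, dimension 3, and minimum distance (q-1)(q-2)/2. -/
/-! On a pair `{x, y}` the codeword `a y₁ + b y₂ + c` takes the value `(b x + a) y + (a x + c)`,
an affine function of `y`. For `(a, b, c) ≠ 0` it vanishes identically for at most one `x = x₀`,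
and for every other `x` at most one pair through `x` is a zero. Charging each zero pair to its
element other than `x₀` bounds the number of zeros by `q - 1`, so the weight is at least
`C(q, 2) - (q - 1) = C(q - 1, 2)`; this is attained by `y₂`, which vanishes exactly on the pairs
through `0`. Since `C(q, 2) > q - 1` for `q > 2`, the evaluation map is injective. -/

open Finset

section Pairs

variable {α : Type*} [DecidableEq α]

lemma Finset.exists_ne_eq_pair_of_mem {s : Finset α} (hs : #s = 2) {x : α} (hx : x ∈ s) :
    ∃ y, y ≠ x ∧ s = {x, y} := by
  obtain ⟨u, v, huv, rfl⟩ := card_eq_two.mp hs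
  rcases mem_insert.mp hx with rfl | hx
  · exact ⟨v, huv.symm, rfl⟩
  · obtain rfl := mem_singleton.mp hx
    exact ⟨u, huv, pair_comm u x⟩

variable [Fintype α]

lemma card_le_card_sub_one_of_mem_unique (Z : Finset {s : Finset α // #s = 2}) (x₀ : α)
    (hZ : ∀ x ≠ x₀, ∀ s ∈ Z, ∀ t ∈ Z, x ∈ s.1 → x ∈ t.1 → s = t) :
    #Z ≤ Fintype.card α - 1 := by
  rw [← card_univ, ← card_erase_of_mem (mem_univ x₀)]
  refine card_le_card_of_forall_subsingleton (fun s x => x ∈ s.1) (fun s _ => ?_) ?_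
  · have hcard : #s.1 - 1 ≤ #(s.1.erase x₀) := pred_card_le_card_erase
    obtain ⟨x, hx⟩ := card_pos.mp (show 0 < #(s.1.erase x₀) by have := s.2; omega)
    exact ⟨x, mem_erase.mpr ⟨(mem_erase.mp hx).1, mem_univ x⟩, (mem_erase.mp hx).2⟩
  · intro x hx s hs t ht
    exact hZ x (mem_erase.mp hx).1 s hs.1 t ht.1 hs.2 ht.2

lemma card_pairs_not_mem (x₀ : α) :
    #{s : {s : Finset α // #s = 2} | x₀ ∉ s.1} = (Fintype.card α - 1).choose 2 := by
  rw [← card_map (Function.Embedding.subtype _), ← card_univ,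
    ← card_erase_of_mem (mem_univ x₀), ← card_powersetCard]
  congr 1
  ext t
  simp [mem_powersetCard, subset_erase, and_comm]

end Pairs

lemma Nat.choose_two_eq_sub_one_add {n : ℕ} (hn : 0 < n) :
    n.choose 2 = (n - 1) + (n - 1).choose 2 := by
  obtain ⟨m, rfl⟩ := Nat.exists_eq_add_of_lt hn
  simp [Nat.choose_succ_succ]

section PairForm

variable {F : Type*} [Field F]

def pairForm (a b c : F) (s : Finset F) : F :=
  a * (∑ x ∈ s, x) + b * (∏ x ∈ s, x) + c

lemma pairForm_pair [DecidableEq F] (a b c : F) {x y : F} (h : x ≠ y) :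
    pairForm a b c {x, y} = (b * x + a) * y + (a * x + c) := by
  rw [pairForm, sum_pair h, prod_pair h]
  ring

lemma pairForm_sub (a b c a' b' c' : F) (s : Finset F) :
    pairForm (a - a') (b - b') (c - c') s = pairForm a b c s - pairForm a' b' c' s := by
  simp only [pairForm]
  ring

lemma exists_forall_ne_coeff_ne_zero {a b c : F} (h : ¬(a = 0 ∧ b = 0 ∧ c = 0)) :
    ∃ x₀ : F, ∀ x ≠ x₀, b * x + a ≠ 0 ∨ a * x + c ≠ 0 := by
  by_cases hbad : ∃ x₀ : F, b * x₀ + a = 0 ∧ a * x₀ + c = 0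
  · obtain ⟨x₀, h₁, h₂⟩ := hbad
    have hb : b ≠ 0 := by
      rintro rfl
      have ha : a = 0 := by linear_combination h₁
      exact h ⟨ha, rfl, by linear_combination h₂ - x₀ * ha⟩
    refine ⟨x₀, fun x hx => Or.inl fun h₃ => hx ?_⟩
    exact mul_left_cancel₀ hb (by linear_combination h₃ - h₁)
  · push Not at hbad
    exact ⟨0, fun x _ => not_and_or.mp fun h' => hbad x h'.1 h'.2⟩

lemma eq_of_pairForm_eq_zero_of_mem [DecidableEq F] {a b c x : F}
    (hx : b * x + a ≠ 0 ∨ a * x + c ≠ 0) {s t : Finset F} (hs : #s = 2) (ht : #t = 2)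
    (hxs : x ∈ s) (hxt : x ∈ t) (hs₀ : pairForm a b c s = 0) (ht₀ : pairForm a b c t = 0) :
    s = t := by
  obtain ⟨y, hyx, rfl⟩ := exists_ne_eq_pair_of_mem hs hxs
  obtain ⟨z, hzx, rfl⟩ := exists_ne_eq_pair_of_mem ht hxt
  rw [pairForm_pair a b c hyx.symm] at hs₀
  rw [pairForm_pair a b c hzx.symm] at ht₀
  have hlin : b * x + a ≠ 0 := by
    intro hlin
    exact hx.resolve_left (not_not.mpr hlin) (by linear_combination hs₀ - y * hlin)
  have hyz : (b * x + a) * (y - z) = 0 := by linear_combination hs₀ - ht₀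
  rw [sub_eq_zero.mp ((mul_eq_zero.mp hyz).resolve_left hlin)]

variable [Fintype F] [DecidableEq F]

lemma card_pairForm_eq_zero_le {a b c : F} (h : ¬(a = 0 ∧ b = 0 ∧ c = 0)) :
    #{s : {s : Finset F // #s = 2} | pairForm a b c s.1 = 0} ≤ Fintype.card F - 1 := by
  obtain ⟨x₀, hx₀⟩ := exists_forall_ne_coeff_ne_zero h
  refine card_le_card_sub_one_of_mem_unique _ x₀ fun x hx s hs t ht hxs hxt => ?_
  exact Subtype.ext <| eq_of_pairForm_eq_zero_of_mem (hx₀ x hx) s.2 t.2 hxs hxt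
    (mem_filter.mp hs).2 (mem_filter.mp ht).2

lemma choose_sub_one_le_card_pairForm_ne_zero {a b c : F} (h : ¬(a = 0 ∧ b = 0 ∧ c = 0)) :
    (Fintype.card F - 1).choose 2 ≤
      #{s : {s : Finset F // #s = 2} | pairForm a b c s.1 ≠ 0} := by
  have hsplit := card_filter_add_card_filter_not (s := univ)
    (fun s : {s : Finset F // #s = 2} => pairForm a b c s.1 = 0)
  rw [card_univ, Fintype.card_finset_len, Nat.choose_two_eq_sub_one_add Fintype.card_pos] at hsplit
  have hle := card_pairForm_eq_zero_le h
  simp only [← ne_eq] at hsplit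
  omega

lemma pairForm_injective (hq : 2 < Fintype.card F) :
    Function.Injective fun p : F × F × F => fun s : {s : Finset F // #s = 2} =>
      pairForm p.1 p.2.1 p.2.2 s.1 := by
  rintro ⟨a, b, c⟩ ⟨a', b', c'⟩ hp
  by_contra hne
  have hne' : ¬(a - a' = 0 ∧ b - b' = 0 ∧ c - c' = 0) := by
    simp only [sub_eq_zero]
    grind
  have hall : #{s : {s : Finset F // #s = 2} | pairForm (a - a') (b - b') (c - c') s.1 = 0}
      = (Fintype.card F - 1) + (Fintype.card F - 1).choose 2 := by
    rw [filter_true_of_mem fun s _ => by rw [pairForm_sub, sub_eq_zero]; exact congrFun hp s,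
      card_univ, Fintype.card_finset_len, Nat.choose_two_eq_sub_one_add Fintype.card_pos]
  have hpos := Nat.choose_pos (n := Fintype.card F - 1) (k := 2) (by omega)
  have hle := card_pairForm_eq_zero_le hne'
  omega

end PairForm

theorem reduced_DJ_code_m2_general (F : Type*) [Field F] [Fintype F] [DecidableEq F]
    (hq : 2 < Fintype.card F) :
    let q := Fintype.card F
    let ev : F → F → F → {s : Finset F // s.card = 2} → F :=
      fun a b c s => a * (∑ x ∈ s.1, x) + b * (∏ x ∈ s.1, x) + c
    let Code : Set ({s : Finset F // s.card = 2} → F) := {w | ∃ a b c, w = ev a b c}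
    let wt : ({s : Finset F // s.card = 2} → F) → ℕ :=
      fun w => (Finset.univ.filter (fun s => w s ≠ 0)).card
    Nat.card {s : Finset F // s.card = 2} = q * (q - 1) / 2 ∧
    Nat.card Code = q ^ 3 ∧
    (∀ w ∈ Code, w ≠ 0 → (q - 1) * (q - 2) / 2 ≤ wt w) ∧
    (∃ w ∈ Code, w ≠ 0 ∧ wt w = (q - 1) * (q - 2) / 2) := by
  intro q ev Code wt
  have hd : (q - 1) * (q - 2) / 2 = (q - 1).choose 2 := by rw [Nat.choose_two_right, Nat.sub_sub]
  have hCode : Code = Set.range fun p : F × F × F => fun s => pairForm p.1 p.2.1 p.2.2 s.1 := by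
    ext w
    simp only [Code, ev, pairForm, Set.mem_range, Prod.exists]
    exact exists₃_congr fun a b c => eq_comm
  refine ⟨by rw [Nat.card_eq_fintype_card, Fintype.card_finset_len, Nat.choose_two_right],
    ?_, ?_, ?_⟩
  · rw [hCode, Nat.card_range_of_injective (pairForm_injective hq), Nat.card_eq_fintype_card,
      Fintype.card_prod, Fintype.card_prod]
    ring
  · rintro _ ⟨a, b, c, rfl⟩ hw
    rw [hd]
    refine choose_sub_one_le_card_pairForm_ne_zero ?_
    rintro ⟨rfl, rfl, rfl⟩
    exact hw (funext fun s => by simp [ev])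
  · have hwt : wt (ev 0 1 0) = (q - 1).choose 2 := by
      rw [← card_pairs_not_mem 0]
      simp [wt, ev, prod_eq_zero_iff]
    refine ⟨ev 0 1 0, ⟨0, 1, 0, rfl⟩, fun h0 => ?_, hwt.trans hd.symm⟩
    have hpos := Nat.choose_pos (n := q - 1) (k := 2) (by omega)
    simp [h0, wt] at hwt
    omega

/-- The reduced Datta-Johnsen code for `m = 2`: evaluating `a y₁ + b y₂ + c` (with
`y₁ = ξ + ξ'`, `y₂ = ξξ'`) on the unordered pairs of distinct elements of `F_q`, `q > 2`
odd, gives a linear code of length `q(q-1)/2`, dimension `3` (i.e. `q³` codewords), and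
minimum distance `(q-1)(q-2)/2`. -/
theorem reduced_DJ_code_m2 (F : Type*) [Field F] [Fintype F] [DecidableEq F]
    (hodd : Odd (Fintype.card F)) (hq : 2 < Fintype.card F) :
    let q := Fintype.card F
    let ev : F → F → F → {s : Finset F // s.card = 2} → F :=
      fun a b c s => a * (∑ x ∈ s.1, x) + b * (∏ x ∈ s.1, x) + c
    let Code : Set ({s : Finset F // s.card = 2} → F) := {w | ∃ a b c, w = ev a b c}
    let wt : ({s : Finset F // s.card = 2} → F) → ℕ :=
      fun w => (Finset.univ.filter (fun s => w s ≠ 0)).card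
    Nat.card {s : Finset F // s.card = 2} = q * (q - 1) / 2 ∧
    Nat.card Code = q ^ 3 ∧
    (∀ w ∈ Code, w ≠ 0 → (q - 1) * (q - 2) / 2 ≤ wt w) ∧
    (∃ w ∈ Code, w ≠ 0 ∧ wt w = (q - 1) * (q - 2) / 2) :=
  reduced_DJ_code_m2_general F hq
end

section
/- Let q > 2 be an odd prime power. In the reduced Datta-Johnsen code for m = 2 (evaluating a y_1 + b y_2 + c on unordered pairs of distinct elements of F_q), every non-zero codeword has weight in the set {(q-1)(q-2)/2, (q-1)^2/2, (q^2-2q+3)/2, q(q-1)/2}. -/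
/-!
Count zeros over ordered pairs `(x, y)` of distinct elements: their number `Z` is twice the
number of zero coordinates, and it equals the number of all solutions of
`a (x + y) + b x y + c = 0` (a sum over rows `x`, each a linear equation in `y`) minus the
solutions on the diagonal. For `b ≠ 0` the substitution `u = b x + a` turns the diagonal
equation into `u² = a² - b c`, which has `1 + χ(a² - b c)` solutions for the quadratic
character `χ`; hence `Z = 2(q - 1)`, `q - 3` or `q - 1` according as `a² - b c` is zero, a
nonzero square or a nonsquare. For `b = 0 ≠ a` one gets `Z = q - 1`, and for `a = b = 0` there
are no zeros at all.
-/

open Finset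

namespace Finset

theorem pair_eq_pair_iff {α : Type*} [DecidableEq α] {x y z w : α} :
    ({x, y} : Finset α) = {z, w} ↔ x = z ∧ y = w ∨ x = w ∧ y = z := by
  rw [← coe_inj, coe_pair, coe_pair, Set.pair_eq_pair_iff]

variable {α : Type*} [Fintype α] [DecidableEq α]

theorem card_filter_offDiag_add_card_filter_diag (P : α → α → Prop) [∀ x y, Decidable (P x y)] :
    #{p ∈ univ.offDiag | P p.1 p.2} + #{x | P x x} = ∑ x, #{y | P x y} := by
  have hdiag : #{p ∈ (univ : Finset α).diag | P p.1 p.2} = #{x | P x x} := by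
    rw [diag, filter_map, card_map]
    rfl
  have hsplit : #{p ∈ (univ : Finset α).offDiag | P p.1 p.2}
      + #{p ∈ (univ : Finset α).diag | P p.1 p.2} = #{p : α × α | P p.1 p.2} := by
    rw [← card_union_of_disjoint (disjoint_filter_filter (disjoint_diag_offDiag _).symm),
      ← filter_union, union_comm, diag_union_offDiag, univ_product_univ]
  rw [← hdiag, hsplit, card_filter, Fintype.sum_prod_type]
  simp only [card_filter]

theorem filter_offDiag_pair_eq_pair {x y : α} (hxy : x ≠ y) :
    {p ∈ (univ : Finset α).offDiag | ({p.1, p.2} : Finset α) = {x, y}} = {(x, y), (y, x)} := by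
  ext ⟨u, v⟩
  simp only [mem_filter, mem_offDiag, mem_univ, true_and, pair_eq_pair_iff, mem_insert,
    mem_singleton, Prod.mk.injEq]
  grind

theorem two_mul_card_filter_card_eq_two (P : Finset α → Prop) [DecidablePred P] :
    2 * #{s : {s : Finset α // #s = 2} | P s.1} = #{p ∈ univ.offDiag | P {p.1, p.2}} := by
  set t := ({s : {s : Finset α // #s = 2} | P s.1} : Finset _).map (Function.Embedding.subtype _)
  have hmaps : (({p ∈ univ.offDiag | P {p.1, p.2}} : Finset (α × α)) : Set (α × α)).MapsTo
      (fun p => ({p.1, p.2} : Finset α)) t := by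
    rintro ⟨x, y⟩ hp
    simp only [coe_filter, mem_offDiag, mem_univ, true_and, Set.mem_ofPred_eq] at hp
    simpa [t] using ⟨hp.2, card_pair hp.1⟩
  rw [card_eq_sum_card_fiberwise hmaps, sum_map, mul_comm, ← smul_eq_mul, ← sum_const]
  refine sum_congr rfl fun ⟨s, hs⟩ hPs => ?_
  obtain ⟨x, y, hxy, rfl⟩ := card_eq_two.mp hs
  have hP : P {x, y} := (mem_filter.mp hPs).2
  calc 2 = #{(x, y), (y, x)} := (card_pair (by simp [hxy])).symm
    _ = _ := by
      rw [← filter_offDiag_pair_eq_pair hxy, filter_filter]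
      refine congrArg card (filter_congr fun p _ => ⟨fun h => ⟨?_, h⟩, fun h => h.2⟩)
      simpa [h] using hP

end Finset

section

variable {F : Type*} [Field F] [Fintype F] [DecidableEq F]

theorem card_filter_mul_add_eq_zero (u k : F) :
    #{y : F | u * y + k = 0} = if u = 0 then (if k = 0 then Fintype.card F else 0) else 1 := by
  split_ifs with hu hk
  · simp [hu, hk]
  · simp [hu, hk]
  · refine card_eq_one.mpr ⟨-k / u, ext fun y => ?_⟩
    simp only [mem_filter, mem_univ, true_and, mem_singleton]
    constructor
    · intro h; field_simp; linear_combination h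
    · rintro rfl; field_simp; ring

end

namespace DattaJohnsen

variable {F : Type*} [Field F] [Fintype F] [DecidableEq F]

def entry (a b c x y : F) : F := a * (x + y) + b * (x * y) + c

def numZeros (a b c : F) : ℕ := #{p ∈ univ.offDiag | entry a b c p.1 p.2 = 0}

theorem card_row_zeros (a b c x : F) :
    #{y | entry a b c x y = 0}
      = if a + b * x = 0 then (if a * x + c = 0 then Fintype.card F else 0) else 1 := by
  simp only [entry, show ∀ y, a * (x + y) + b * (x * y) + c = (a + b * x) * y + (a * x + c)
    from fun y => by ring, card_filter_mul_add_eq_zero]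

theorem sum_card_row_zeros_hyperbola (a c : F) {b : F} (hb : b ≠ 0) :
    ∑ x, #{y | entry a b c x y = 0}
      = Fintype.card F - 1 + if a ^ 2 - b * c = 0 then Fintype.card F else 0 := by
  have hrow : ∀ x, #{y | entry a b c x y = 0}
      = if x = -a / b then (if a ^ 2 - b * c = 0 then Fintype.card F else 0) else 1 := by
    intro x
    rw [card_row_zeros]
    by_cases hx : x = -a / b
    · have hpivot : a + b * x = 0 := by rw [hx]; field_simp; ring
      have hconst : a * x + c = -(a ^ 2 - b * c) / b := by rw [hx]; field_simp; ring
      rw [if_pos hpivot, if_pos hx, hconst]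
      simp only [neg_div, neg_eq_zero, div_eq_zero_iff, hb, or_false]
    · have hpivot : a + b * x ≠ 0 := fun h => hx (by field_simp; linear_combination h)
      simp [hx, hpivot]
  rw [Fintype.sum_congr _ _ hrow, ← add_sum_erase _ _ (mem_univ (-a / b)), if_pos rfl,
    sum_congr rfl fun x hx => if_neg (ne_of_mem_erase hx), sum_const,
    card_erase_of_mem (mem_univ _), card_univ, smul_eq_mul, mul_one, add_comm]

theorem card_diag_zeros_hyperbola (a c : F) {b : F} (hb : b ≠ 0) :
    #{x | entry a b c x x = 0} = #{u : F | u ^ 2 = a ^ 2 - b * c} := by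
  refine card_equiv ((Equiv.mulLeft₀ b hb).trans (Equiv.addRight a)) fun x => ?_
  simp only [mem_filter, mem_univ, true_and, Equiv.trans_apply, Equiv.mulLeft₀_apply,
    Equiv.coe_addRight]
  rw [← sub_eq_zero (a := (b * x + a) ^ 2), show (b * x + a) ^ 2 - (a ^ 2 - b * c)
    = b * entry a b c x x by simp only [entry]; ring, mul_eq_zero, or_iff_right hb]

theorem numZeros_hyperbola (hF : ringChar F ≠ 2) (a c : F) {b : F} (hb : b ≠ 0) :
    (numZeros a b c : ℤ)
      = Fintype.card F - 2 + (if a ^ 2 - b * c = 0 then (Fintype.card F : ℤ) else 0)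
        - quadraticChar F (a ^ 2 - b * c) := by
  have hsplit := card_filter_offDiag_add_card_filter_diag (fun x y => entry a b c x y = 0)
  have hsqrt := quadraticChar_card_sqrts hF (a ^ 2 - b * c)
  rw [sum_card_row_zeros_hyperbola a c hb, card_diag_zeros_hyperbola a c hb] at hsplit
  rw [Set.toFinset_ofPred] at hsqrt
  have hq := Fintype.card_pos (α := F)
  unfold numZeros
  split_ifs at hsplit ⊢ <;> omega

theorem numZeros_linear (h2 : (2 : F) ≠ 0) (c : F) {a : F} (ha : a ≠ 0) :
    numZeros a 0 c = Fintype.card F - 1 := by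
  have hsplit := card_filter_offDiag_add_card_filter_diag (fun x y => entry a 0 c x y = 0)
  have hdiag : #{x : F | entry a 0 c x x = 0} = 1 := by
    simp only [entry, show ∀ x, a * (x + x) + 0 * (x * x) + c = (2 * a) * x + c
      from fun x => by ring, card_filter_mul_add_eq_zero, if_neg (mul_ne_zero h2 ha)]
  simp only [card_row_zeros, zero_mul, add_zero, if_neg ha, hdiag, sum_const, card_univ,
    smul_eq_mul, mul_one] at hsplit
  unfold numZeros
  omega

theorem numZeros_mem (hF : ringChar F ≠ 2) {a b c : F} (habc : ¬(a = 0 ∧ b = 0 ∧ c = 0)) :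
    numZeros a b c
      ∈ ({0, Fintype.card F - 1, 2 * (Fintype.card F - 1), Fintype.card F - 3} : Set ℕ) := by
  simp only [Set.mem_insert_iff, Set.mem_singleton_iff]
  by_cases hb : b = 0
  · subst hb
    by_cases ha : a = 0
    · subst ha
      have hc : c ≠ 0 := by tauto
      simp [numZeros, entry, hc]
    · exact Or.inr (Or.inl (numZeros_linear (Ring.two_ne_zero hF) c ha))
  · have hZ := numZeros_hyperbola hF a c hb
    by_cases hD : a ^ 2 - b * c = 0
    · rw [if_pos hD, hD, quadraticChar_zero] at hZ
      omega
    · rw [if_neg hD] at hZ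
      rcases quadraticChar_dichotomy hD with hχ | hχ <;> rw [hχ] at hZ <;> omega

theorem two_mul_weight_add_numZeros (a b c : F) :
    2 * #{s : {s : Finset F // #s = 2} | a * (∑ x ∈ s.1, x) + b * (∏ x ∈ s.1, x) + c ≠ 0}
      + numZeros a b c = Fintype.card F * (Fintype.card F - 1) := by
  rw [two_mul_card_filter_card_eq_two (fun s => a * (∑ x ∈ s, x) + b * (∏ x ∈ s, x) + c ≠ 0)]
  have hpair : {p ∈ (univ : Finset F).offDiag |
        a * (∑ x ∈ {p.1, p.2}, x) + b * (∏ x ∈ {p.1, p.2}, x) + c ≠ 0}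
      = {p ∈ (univ : Finset F).offDiag | ¬entry a b c p.1 p.2 = 0} :=
    filter_congr fun p hp => by
      rw [sum_pair (mem_offDiag.mp hp).2.2, prod_pair (mem_offDiag.mp hp).2.2, entry]
  rw [hpair, numZeros, add_comm, card_filter_add_card_filter_not, offDiag_card, card_univ,
    Nat.mul_sub_one]

end DattaJohnsen

theorem mem_weights_of_two_mul_add {q w z : ℕ} (hq : 3 ≤ q)
    (hz : z ∈ ({0, q - 1, 2 * (q - 1), q - 3} : Set ℕ)) (h : 2 * w + z = q * (q - 1)) :
    w ∈ ({(q - 1) * (q - 2) / 2, (q - 1) ^ 2 / 2, (q ^ 2 - 2 * q + 3) / 2,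
        q * (q - 1) / 2} : Set ℕ) := by
  obtain ⟨n, rfl⟩ : ∃ n, q = n + 3 := ⟨q - 3, by omega⟩
  have hsq : (n + 3) ^ 2 - 2 * (n + 3) + 3 = n ^ 2 + 4 * n + 6 := by
    rw [Nat.sub_eq_of_eq_add (by ring : (n + 3) ^ 2 = n ^ 2 + 4 * n + 3 + 2 * (n + 3))]
  simp only [Set.mem_insert_iff, Set.mem_singleton_iff, hsq, show n + 3 - 1 = n + 2 by omega,
    show n + 3 - 2 = n + 1 by omega, show n + 3 - 3 = n by omega] at hz h ⊢
  rcases hz with rfl | rfl | rfl | rfl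
  · exact Or.inr (Or.inr (Or.inr (by omega)))
  · exact Or.inr (Or.inl (by ring_nf at h ⊢; omega))
  · exact Or.inl (by ring_nf at h ⊢; omega)
  · exact Or.inr (Or.inr (Or.inl (by ring_nf at h ⊢; omega)))

theorem reduced_DJ_code_m2_weights_general (F : Type*) [Field F] [Fintype F] [DecidableEq F]
    (hodd : Odd (Fintype.card F)) :
    let q := Fintype.card F
    let ev : F → F → F → {s : Finset F // s.card = 2} → F :=
      fun a b c s => a * (∑ x ∈ s.1, x) + b * (∏ x ∈ s.1, x) + c
    let Code : Set ({s : Finset F // s.card = 2} → F) := {w | ∃ a b c, w = ev a b c}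
    let wt : ({s : Finset F // s.card = 2} → F) → ℕ :=
      fun w => (Finset.univ.filter (fun s => w s ≠ 0)).card
    ∀ w ∈ Code, w ≠ 0 →
      wt w ∈ ({(q - 1) * (q - 2) / 2, (q - 1) ^ 2 / 2, (q ^ 2 - 2 * q + 3) / 2,
        q * (q - 1) / 2} : Set ℕ) := by
  intro q ev Code wt w ⟨a, b, c, hw⟩ hw0
  subst hw
  have hoddq : q % 2 = 1 := Nat.odd_iff.mp hodd
  have hF : ringChar F ≠ 2 := fun h => by
    have := FiniteField.even_card_of_char_two h
    omega
  have hq : 3 ≤ q := by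
    have := Fintype.one_lt_card (α := F)
    omega
  have habc : ¬(a = 0 ∧ b = 0 ∧ c = 0) := by
    rintro ⟨rfl, rfl, rfl⟩
    exact hw0 (funext fun s => by simp [ev])
  exact mem_weights_of_two_mul_add hq (DattaJohnsen.numZeros_mem hF habc)
    (DattaJohnsen.two_mul_weight_add_numZeros a b c)

/-- Weight distribution of the reduced Datta-Johnsen code for `m = 2`: every non-zero
codeword has weight `(q-1)(q-2)/2`, `(q-1)²/2`, `(q²-2q+3)/2` or `q(q-1)/2`. -/
theorem reduced_DJ_code_m2_weights (F : Type*) [Field F] [Fintype F] [DecidableEq F]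
    (hodd : Odd (Fintype.card F)) (hq : 2 < Fintype.card F) :
    let q := Fintype.card F
    let ev : F → F → F → {s : Finset F // s.card = 2} → F :=
      fun a b c s => a * (∑ x ∈ s.1, x) + b * (∏ x ∈ s.1, x) + c
    let Code : Set ({s : Finset F // s.card = 2} → F) := {w | ∃ a b c, w = ev a b c}
    let wt : ({s : Finset F // s.card = 2} → F) → ℕ :=
      fun w => (Finset.univ.filter (fun s => w s ≠ 0)).card
    ∀ w ∈ Code, w ≠ 0 →
      wt w ∈ ({(q - 1) * (q - 2) / 2, (q - 1) ^ 2 / 2, (q ^ 2 - 2 * q + 3) / 2,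
        q * (q - 1) / 2} : Set ℕ) :=
  reduced_DJ_code_m2_weights_general F hodd
end
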